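/- arXiv:2103.04861 — 4 statements merged into one kernel-verified Lean document; each statement's English description precedes it below -/
import Mathlib

section
/- For every integer n ≥ 1 and every r > 0, the modified Bessel functions of the first kind satisfy I_{n-1}(r) · I_{n+1}(r) < I_n(r)². -/
open Real Filter Set

/-- Modified Bessel function of the first kind of (integer) order `n`. -/
noncomputable def besselI (n : ℕ) (r : ℝ) : ℝ :=
  ∑' k : ℕ, (1 / (k.factorial * Real.Gamma (n + k + 1))) * (r / 2) ^ (n + 2 * k)

/-- `P n r = I_{n+1}(r) / (r * I_n(r))`. -/
noncomputable def P (n : ℕ) (r : ℝ) : ℝ := besselI (n + 1) r / (r * besselI n r)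

/-!
Expanding both factors as power series in `r / 2`, the Cauchy product together with Vandermonde's
identity gives
`I_p(r) I_q(r) = ∑ₖ (p+q+2k)! / (k! (p+k)! (q+k)! (p+q+k)!) · (r/2)^(p+q+2k)`.
For `(p, q) = (n-1, n+1)` and `(n, n)` these coefficients differ only in the factor
`(p+k)! (q+k)!`, and `(n+k)!² < (n+k-1)! (n+k+1)!`, so the inequality holds coefficientwise,
strictly.
-/

open Finset Nat

noncomputable def besselITerm (n : ℕ) (r : ℝ) (k : ℕ) : ℝ :=
  (r / 2) ^ (n + 2 * k) / (k ! * (n + k)!)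

theorem besselI_eq_tsum (n : ℕ) (r : ℝ) : besselI n r = ∑' k, besselITerm n r k := by
  refine tsum_congr fun k => ?_
  rw [besselITerm, show (n : ℝ) + k + 1 = ((n + k : ℕ) : ℝ) + 1 by push_cast; ring,
    Real.Gamma_nat_eq_factorial, one_div_mul_eq_div]

theorem summable_norm_besselITerm (n : ℕ) (r : ℝ) : Summable fun k => ‖besselITerm n r k‖ := by
  refine ((Real.summable_pow_div_factorial ((r / 2) ^ 2)).mul_left (|r / 2| ^ n)).of_nonneg_of_le
    (fun k => norm_nonneg _) fun k => ?_
  rw [besselITerm, norm_div, norm_pow, Real.norm_eq_abs, pow_add, pow_mul, mul_div_assoc,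
    Real.norm_of_nonneg (by positivity), sq_abs]
  gcongr
  exact le_mul_of_one_le_right (by positivity) (mod_cast (n + k).factorial_pos)

noncomputable def besselIMulCoeff (p q k : ℕ) : ℝ :=
  (p + q + 2 * k)! / (k ! * (p + k)! * (q + k)! * (p + q + k)!)

theorem choose_eq_sum_range_choose_mul_choose (p q k : ℕ) :
    (p + q + 2 * k).choose (q + k) =
      ∑ i ∈ range (k + 1), k.choose i * (p + q + k).choose (q + (k - i)) := by
  rw [show p + q + 2 * k = k + (p + q + k) by ring, add_choose_eq,
    sum_antidiagonal_eq_sum_range_succ_mk,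
    ← sum_subset (range_subset_range.2 (by omega : k + 1 ≤ (q + k).succ)) fun i hi hik => ?_]
  · refine sum_congr rfl fun i hi => ?_
    rw [Nat.add_sub_assoc (by simpa [Nat.lt_succ_iff] using hi)]
  · rw [choose_eq_zero_of_lt (by simpa [Nat.lt_succ_iff] using hik), zero_mul]

theorem sum_antidiagonal_inv_factorials_eq_besselIMulCoeff (p q k : ℕ) :
    ∑ ij ∈ antidiagonal k, ((ij.1 ! * (p + ij.1)! * ij.2 ! * (q + ij.2)! : ℕ) : ℝ)⁻¹ =
      besselIMulCoeff p q k := by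
  calc _ = ∑ i ∈ range (k + 1),
          (k.choose i : ℝ) * (p + q + k).choose (q + (k - i)) / (k ! * (p + q + k)!) := by
        rw [sum_antidiagonal_eq_sum_range_succ
          (fun i j => ((i ! * (p + i)! * j ! * (q + j)! : ℕ) : ℝ)⁻¹)]
        refine sum_congr rfl fun i hi => ?_
        have hik : i ≤ k := by simpa [Nat.lt_succ_iff] using hi
        rw [cast_choose ℝ hik, cast_choose ℝ (by omega : q + (k - i) ≤ p + q + k),
          show p + q + k - (q + (k - i)) = p + i by omega]
        push_cast
        field_simp
    _ = besselIMulCoeff p q k := by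
        have vandermonde : ((p + q + 2 * k).choose (q + k) : ℝ) =
            ∑ i ∈ range (k + 1), (k.choose i : ℝ) * (p + q + k).choose (q + (k - i)) := by
          exact_mod_cast choose_eq_sum_range_choose_mul_choose p q k
        rw [← sum_div, ← vandermonde, cast_choose ℝ (by omega : q + k ≤ p + q + 2 * k),
          show p + q + 2 * k - (q + k) = p + k by omega, besselIMulCoeff]
        field_simp

theorem hasSum_besselI_mul_besselI (p q : ℕ) (r : ℝ) :
    HasSum (fun k => besselIMulCoeff p q k * (r / 2) ^ (p + q + 2 * k))
      (besselI p r * besselI q r) := by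
  have hp := summable_norm_besselITerm p r
  have hq := summable_norm_besselITerm q r
  have cauchy := (summable_norm_sum_mul_antidiagonal_of_summable_norm hp hq).of_norm.hasSum
  rw [← tsum_mul_tsum_eq_tsum_sum_antidiagonal_of_summable_norm hp hq, ← besselI_eq_tsum,
    ← besselI_eq_tsum] at cauchy
  refine cauchy.congr_fun fun k => ?_
  rw [← sum_antidiagonal_inv_factorials_eq_besselIMulCoeff, mul_comm, mul_sum]
  refine sum_congr rfl fun ⟨i, j⟩ hij => ?_
  rw [HasAntidiagonal.mem_antidiagonal] at hij
  rw [besselITerm, besselITerm, ← hij]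
  push_cast
  field_simp
  ring

theorem factorial_succ_mul_factorial_succ_lt (N : ℕ) : (N + 1)! * (N + 1)! < N ! * (N + 2)! := by
  have h := N.factorial_pos
  rw [factorial_succ (N + 1), factorial_succ N]
  nlinarith [Nat.mul_pos (Nat.succ_pos N) (Nat.mul_pos h h)]

theorem besselIMulCoeff_lt (m k : ℕ) :
    besselIMulCoeff m (m + 2) k < besselIMulCoeff (m + 1) (m + 1) k := by
  rw [besselIMulCoeff, besselIMulCoeff, show m + (m + 2) = m + 1 + (m + 1) by ring,
    mul_assoc (k ! : ℝ) ((m + k)! : ℝ), mul_assoc (k ! : ℝ) ((m + 1 + k)! : ℝ)]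
  gcongr _ / (_ * ?_ * _)
  rw [show m + 1 + k = m + k + 1 by ring, show m + 2 + k = m + k + 2 by ring]
  exact_mod_cast factorial_succ_mul_factorial_succ_lt (m + k)

theorem besselI_turan (n : ℕ) (hn : 1 ≤ n) (r : ℝ) (hr : 0 < r) :
    besselI (n - 1) r * besselI (n + 1) r < (besselI n r) ^ 2 := by
  obtain ⟨m, rfl⟩ := exists_add_of_le hn
  rw [add_tsub_cancel_left, sq, add_comm 1 m, add_assoc]
  have hsum := hasSum_besselI_mul_besselI m (m + 2) r
  rw [show m + (m + 2) = m + 1 + (m + 1) by ring] at hsum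
  refine hasSum_lt (i := 0) (fun k => ?_) ?_ hsum (hasSum_besselI_mul_besselI (m + 1) (m + 1) r)
  · gcongr
    exact (besselIMulCoeff_lt m k).le
  · gcongr
    exact besselIMulCoeff_lt m 0
end

section
/- For every integer n ≥ 1 and every r > 0, the modified Bessel functions of the first kind satisfy I_{n-1}(r) · I_{n+1}(r) > I_n(r)² − (2/r) · I_n(r) · I_{n+1}(r). -/
open Real Filter Set

open scoped Nat

/-!
With `t = r / 2` and `a k = t ^ (2 * k) / (k! (n + k)!)` one has `I_n = t ^ n ∑ a k`,
`I_{n+1} = t ^ (n + 1) ∑ a k / (n + k + 1)` and `I_{n-1} + (2 / r) I_n = t ^ (n - 1) ∑ (n + k + 1) a k`.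
The inequality is therefore the strict Cauchy–Schwarz inequality `(∑ a)² < (∑ w a) (∑ a / w)`
for the non-constant weights `w k = n + k + 1`.
-/

theorem mul_add_sq_mul_div_eq (a c : ℝ) {w : ℝ} (hw : w ≠ 0) :
    w * a + c ^ 2 * (a / w) = 2 * c * a + a * (w - c) ^ 2 / w := by
  field_simp
  ring

theorem two_mul_mul_le_mul_add_sq_mul_div {a w : ℝ} (ha : 0 ≤ a) (hw : 0 < w) (c : ℝ) :
    2 * c * a ≤ w * a + c ^ 2 * (a / w) := by
  rw [mul_add_sq_mul_div_eq a c hw.ne']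
  exact le_add_of_nonneg_right (by positivity)

theorem two_mul_mul_lt_mul_add_sq_mul_div {a w c : ℝ} (ha : 0 < a) (hw : 0 < w) (hc : w ≠ c) :
    2 * c * a < w * a + c ^ 2 * (a / w) := by
  rw [mul_add_sq_mul_div_eq a c hw.ne']
  have := sub_ne_zero.mpr hc
  exact lt_add_of_pos_right _ (by positivity)

theorem sq_tsum_lt_tsum_mul_mul_tsum_div {ι : Type*} {a w : ι → ℝ} (ha : ∀ k, 0 < a k)
    (hw : ∀ k, 0 < w k) (hwa : Summable fun k => w k * a k) (haw : Summable fun k => a k / w k)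
    {i j : ι} (hij : w i ≠ w j) :
    (∑' k, a k) ^ 2 < (∑' k, w k * a k) * ∑' k, a k / w k := by
  have hsum_add (c : ℝ) : Summable fun k => w k * a k + c ^ 2 * (a k / w k) :=
    hwa.add (haw.mul_left _)
  have hsa : Summable a := by
    refine .of_nonneg_of_le (fun k => (ha k).le) (fun k => ?_) ((hsum_add 1).div_const 2)
    linarith [two_mul_mul_le_mul_add_sq_mul_div (ha k).le (hw k) 1]
  set A := ∑' k, a k
  set X := ∑' k, w k * a k
  set Y := ∑' k, a k / w k
  have hY : 0 < Y := haw.tsum_pos (fun k => (div_pos (ha k) (hw k)).le) i (div_pos (ha i) (hw i))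
  -- Minimise `X + c² Y - 2 c A` at `c = A / Y`: a weighted AM-GM, strict since `w` is not constant.
  set c := A / Y with hc
  obtain ⟨k, hk⟩ : ∃ k, w k ≠ c := by
    by_cases h : w i = c
    · exact ⟨j, h ▸ hij.symm⟩
    · exact ⟨i, h⟩
  have hlt : 2 * c * A < X + c ^ 2 * Y := by
    have := (hsa.mul_left (2 * c)).tsum_lt_tsum
      (fun k => two_mul_mul_le_mul_add_sq_mul_div (ha k).le (hw k) c)
      (two_mul_mul_lt_mul_add_sq_mul_div (ha k) (hw k) hk) (hsum_add c)
    rwa [tsum_mul_left, hwa.tsum_add (haw.mul_left _), tsum_mul_left] at this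
  have hdivY : A ^ 2 / Y < X := by
    have e1 : 2 * c * A = 2 * (A ^ 2 / Y) := by ring
    have e2 : c ^ 2 * Y = A ^ 2 / Y := by rw [hc]; field_simp
    linarith
  exact (div_lt_iff₀ hY).mp hdivY

noncomputable def besselCoeff (N : ℕ) (x : ℝ) (k : ℕ) : ℝ := x ^ k / ((k ! : ℝ) * (N + k)!)

theorem besselCoeff_eq_mul_succ (N : ℕ) (x : ℝ) (k : ℕ) :
    besselCoeff N x k = ((N : ℝ) + k + 1) * besselCoeff (N + 1) x k := by
  rw [besselCoeff, besselCoeff, show N + 1 + k = N + k + 1 by omega, Nat.factorial_succ]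
  push_cast
  field_simp

theorem summable_besselCoeff (N : ℕ) (x : ℝ) : Summable (besselCoeff N x) := by
  refine .of_norm_bounded (Real.summable_pow_div_factorial ‖x‖) fun k => ?_
  rw [besselCoeff, norm_div, norm_pow, norm_mul, Real.norm_natCast, Real.norm_natCast]
  gcongr
  exact le_mul_of_one_le_right (by positivity) (by exact_mod_cast (N + k).factorial_pos)

theorem besselI_eq_mul_tsum (N : ℕ) (r : ℝ) :
    besselI N r = (r / 2) ^ N * ∑' k, besselCoeff N ((r / 2) ^ 2) k := by
  rw [besselI, ← tsum_mul_left]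
  refine tsum_congr fun k => ?_
  rw [besselCoeff, show (N : ℝ) + k + 1 = ((N + k : ℕ) : ℝ) + 1 by push_cast; ring,
    Real.Gamma_nat_eq_factorial, pow_add, pow_mul]
  field_simp

theorem besselCoeff_add_besselCoeff_succ (N : ℕ) (x : ℝ) (k : ℕ) :
    besselCoeff N x k + besselCoeff (N + 1) x k = ((N : ℝ) + k + 2) * besselCoeff (N + 1) x k := by
  rw [besselCoeff_eq_mul_succ N]
  ring

theorem besselCoeff_add_two (N : ℕ) (x : ℝ) (k : ℕ) :
    besselCoeff (N + 2) x k = besselCoeff (N + 1) x k / ((N : ℝ) + k + 2) := by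
  rw [besselCoeff_eq_mul_succ (N + 1)]
  push_cast
  field_simp
  ring

theorem besselI_add_two_div_mul_besselI_succ (N : ℕ) {r : ℝ} (hr : r ≠ 0) :
    besselI N r + 2 / r * besselI (N + 1) r =
      (r / 2) ^ N * ∑' k, ((N : ℝ) + k + 2) * besselCoeff (N + 1) ((r / 2) ^ 2) k := by
  have hpow : 2 / r * (r / 2) ^ (N + 1) = (r / 2) ^ N := by
    field_simp
    ring
  rw [besselI_eq_mul_tsum, besselI_eq_mul_tsum, ← mul_assoc, hpow, ← mul_add,
    ← (summable_besselCoeff _ _).tsum_add (summable_besselCoeff _ _)]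
  simp only [besselCoeff_add_besselCoeff_succ]

theorem besselI_add_two_eq_mul_tsum (N : ℕ) (r : ℝ) :
    besselI (N + 2) r =
      (r / 2) ^ (N + 2) * ∑' k, besselCoeff (N + 1) ((r / 2) ^ 2) k / ((N : ℝ) + k + 2) := by
  simp only [besselI_eq_mul_tsum, besselCoeff_add_two]

theorem besselI_turan_lower (n : ℕ) (hn : 1 ≤ n) (r : ℝ) (hr : 0 < r) :
    besselI (n - 1) r * besselI (n + 1) r >
      (besselI n r) ^ 2 - (2 / r) * besselI n r * besselI (n + 1) r := by
  obtain ⟨m, rfl⟩ : ∃ m, n = m + 1 := ⟨n - 1, by omega⟩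
  rw [Nat.add_sub_cancel, show m + 1 + 1 = m + 2 from rfl]
  set t := r / 2
  set a := besselCoeff (m + 1) (t ^ 2)
  have hweighted : Summable fun k : ℕ => ((m : ℝ) + k + 2) * a k :=
    ((summable_besselCoeff m _).add (summable_besselCoeff (m + 1) _)).congr
      (besselCoeff_add_besselCoeff_succ m _)
  have hdiv : Summable fun k : ℕ => a k / ((m : ℝ) + k + 2) :=
    (summable_besselCoeff (m + 2) _).congr (besselCoeff_add_two m _)
  have hCS := sq_tsum_lt_tsum_mul_mul_tsum_div (a := a) (w := fun k : ℕ => (m : ℝ) + k + 2)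
    (fun k => by simp only [a, besselCoeff]; positivity) (fun k => by positivity)
    hweighted hdiv (i := 0) (j := 1) (by norm_num)
  have key : besselI (m + 1) r ^ 2 <
      (besselI m r + 2 / r * besselI (m + 1) r) * besselI (m + 2) r := by
    rw [besselI_add_two_div_mul_besselI_succ m hr.ne', besselI_add_two_eq_mul_tsum,
      besselI_eq_mul_tsum]
    have ht : 0 < t ^ (2 * m + 2) := by positivity
    calc _ = t ^ (2 * m + 2) * (∑' k, a k) ^ 2 := by ring
      _ < t ^ (2 * m + 2) *
          ((∑' k : ℕ, ((m : ℝ) + k + 2) * a k) * ∑' k : ℕ, a k / ((m : ℝ) + k + 2)) := by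
        gcongr
      _ = _ := by ring
  rw [add_mul] at key
  linarith
end

section
/- For every nonnegative integer n, P_n(r) → 0 and r·P_n(r) → 1 as r → ∞. -/
/-!
With `x = r / 2`, `I_n(r) = ∑ₖ t(n,k)` where `t(n,k) = x ^ (n + 2k) / (k! (n + k)!)`, and neighbouring
terms satisfy `x t(n,k) = (n+k+1) t(n+1,k)` and `x t(n+1,k) = (k+1) t(n,k+1)`. These give the
recurrence `r I_n = 2(n+1) I_{n+1} + r I_{n+2}` and, by AM-GM, `2 t(n+1,k) ≤ t(n,k) + t(n,k+1)`,
whence `I_{n+1} ≤ I_n`. So `r P_n(r) = I_{n+1}/I_n` is squeezed between `1 - 2(n+1)/r` and `1`.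
-/

open Real Filter Set

open Nat

noncomputable def besselTerm (n k : ℕ) (x : ℝ) : ℝ := x ^ (n + 2 * k) / (k ! * (n + k)!)

theorem besselI_eq_tsum_besselTerm (n : ℕ) (r : ℝ) :
    besselI n r = ∑' k, besselTerm n k (r / 2) := by
  refine tsum_congr fun k => ?_
  rw [besselTerm, show (n : ℝ) + k + 1 = ((n + k : ℕ) : ℝ) + 1 by push_cast; ring,
    Gamma_nat_eq_factorial]
  ring

theorem besselTerm_nonneg (n k : ℕ) {x : ℝ} (hx : 0 ≤ x) : 0 ≤ besselTerm n k x := by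
  unfold besselTerm; positivity

theorem summable_besselTerm (n : ℕ) (x : ℝ) : Summable fun k => besselTerm n k x := by
  refine ((summable_pow_div_factorial |x|).mul_right (exp |x|)).of_norm_bounded fun k => ?_
  have hsplit : besselTerm n k x = x ^ k / k ! * (x ^ (n + k) / (n + k)!) := by
    rw [besselTerm, show n + 2 * k = k + (n + k) by ring, pow_add]; ring
  rw [hsplit, norm_mul, Real.norm_eq_abs, Real.norm_eq_abs, abs_div, abs_div, abs_pow, abs_pow,
    Nat.abs_cast, Nat.abs_cast]
  gcongr
  exact pow_div_factorial_le_exp _ (abs_nonneg x) _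

theorem mul_besselTerm (n k : ℕ) (x : ℝ) :
    x * besselTerm n k x = (n + k + 1) * besselTerm (n + 1) k x := by
  unfold besselTerm
  rw [show n + 1 + k = (n + k) + 1 by ring, factorial_succ,
    show n + 1 + 2 * k = n + 2 * k + 1 by ring, pow_succ]
  push_cast
  field_simp

theorem mul_besselTerm_succ (n k : ℕ) (x : ℝ) :
    x * besselTerm (n + 1) k x = (k + 1) * besselTerm n (k + 1) x := by
  unfold besselTerm
  rw [show n + (k + 1) = n + 1 + k by ring, factorial_succ k,
    show n + 2 * (k + 1) = n + 1 + 2 * k + 1 by ring, pow_succ]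
  push_cast
  field_simp

theorem two_mul_besselTerm_succ_le (n k : ℕ) {x : ℝ} (hx : 0 < x) :
    2 * besselTerm (n + 1) k x ≤ besselTerm n k x + besselTerm n (k + 1) x := by
  set B := besselTerm (n + 1) k x
  have key : x * (k + 1) * (besselTerm n k x + besselTerm n (k + 1) x - 2 * B) =
      B * ((x - (k + 1)) ^ 2 + n * (k + 1)) := by
    linear_combination (k + 1 : ℝ) * mul_besselTerm n k x - x * mul_besselTerm_succ n k x
  have hrhs : 0 ≤ B * ((x - (k + 1)) ^ 2 + n * (k + 1)) :=
    mul_nonneg (besselTerm_nonneg _ _ hx.le) (by positivity)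
  have := nonneg_of_mul_nonneg_right (key ▸ hrhs) (by positivity : (0 : ℝ) < x * (k + 1))
  linarith

theorem besselI_pos (n : ℕ) {r : ℝ} (hr : 0 < r) : 0 < besselI n r := by
  rw [besselI_eq_tsum_besselTerm]
  refine (summable_besselTerm n _).tsum_pos (fun k => besselTerm_nonneg n k (by positivity)) 0 ?_
  unfold besselTerm; positivity

theorem besselI_succ_le (n : ℕ) {r : ℝ} (hr : 0 < r) : besselI (n + 1) r ≤ besselI n r := by
  simp only [besselI_eq_tsum_besselTerm]
  set x := r / 2
  have hx : 0 < x := by positivity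
  have hs := summable_besselTerm n x
  have hs' : Summable fun k => besselTerm n (k + 1) x := (summable_nat_add_iff 1).2 hs
  have hsum : 2 * ∑' k, besselTerm (n + 1) k x ≤
      ∑' k, besselTerm n k x + ∑' k, besselTerm n (k + 1) x := by
    rw [← tsum_mul_left, ← hs.tsum_add hs']
    exact ((summable_besselTerm _ x).mul_left 2).tsum_le_tsum
      (two_mul_besselTerm_succ_le n · hx) (hs.add hs')
  have hzero := besselTerm_nonneg n 0 hx.le
  rw [hs.tsum_eq_zero_add] at hsum ⊢
  linarith

theorem mul_besselI (n : ℕ) (r : ℝ) :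
    r * besselI n r = 2 * (n + 1) * besselI (n + 1) r + r * besselI (n + 2) r := by
  simp only [besselI_eq_tsum_besselTerm]
  set x := r / 2
  have hs := fun m => summable_besselTerm m x
  have hterm : ∀ k, x * besselTerm n (k + 1) x =
      (n + 1) * besselTerm (n + 1) (k + 1) x + x * besselTerm (n + 2) k x := fun k => by
    have h := mul_besselTerm n (k + 1) x
    push_cast at h
    linear_combination h - mul_besselTerm_succ (n + 1) k x
  have hshift : ∑' k, x * besselTerm n (k + 1) x =
      (n + 1) * ∑' k, besselTerm (n + 1) (k + 1) x + x * ∑' k, besselTerm (n + 2) k x := by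
    rw [tsum_congr hterm,
      ((summable_nat_add_iff 1).2 (hs _) |>.mul_left _).tsum_add ((hs _).mul_left _),
      tsum_mul_left, tsum_mul_left]
  rw [tsum_mul_left] at hshift
  have h0 := mul_besselTerm n 0 x
  push_cast at h0
  rw [show r = 2 * x by ring, (hs n).tsum_eq_zero_add, (hs (n + 1)).tsum_eq_zero_add]
  linear_combination 2 * h0 + 2 * hshift

theorem besselI_succ_div_le_one (n : ℕ) {r : ℝ} (hr : 0 < r) :
    besselI (n + 1) r / besselI n r ≤ 1 :=
  (div_le_one (besselI_pos n hr)).2 (besselI_succ_le n hr)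

theorem one_sub_div_le_besselI_succ_div (n : ℕ) {r : ℝ} (hr : 0 < r) :
    1 - 2 * (n + 1) / r ≤ besselI (n + 1) r / besselI n r := by
  rw [le_div_iff₀ (besselI_pos n hr)]
  refine le_of_mul_le_mul_left ?_ hr
  have hexpand : r * ((1 - 2 * (n + 1) / r) * besselI n r) =
      r * besselI n r - 2 * (n + 1) * besselI n r := by
    field_simp
  have h1 := mul_le_mul_of_nonneg_left (besselI_succ_le n hr)
    (by positivity : (0 : ℝ) ≤ 2 * (n + 1))
  have h2 := mul_le_mul_of_nonneg_left (besselI_succ_le (n + 1) hr) hr.le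
  linarith [mul_besselI n r]

theorem tendsto_besselI_succ_div_atTop (n : ℕ) :
    Tendsto (fun r : ℝ => besselI (n + 1) r / besselI n r) atTop (nhds 1) := by
  have hlower : Tendsto (fun r : ℝ => 1 - 2 * (n + 1) / r) atTop (nhds 1) := by
    have h := (tendsto_const_nhds (x := (2 * (n + 1) : ℝ))).div_atTop tendsto_id
    simpa using (tendsto_const_nhds (x := (1 : ℝ))).sub h
  refine tendsto_of_tendsto_of_tendsto_of_le_of_le' hlower tendsto_const_nhds ?_ ?_ <;>
    filter_upwards [eventually_gt_atTop 0] with r hr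
  exacts [one_sub_div_le_besselI_succ_div n hr, besselI_succ_div_le_one n hr]

theorem mul_P (n : ℕ) {r : ℝ} (hr : r ≠ 0) : r * P n r = besselI (n + 1) r / besselI n r := by
  rw [P, ← mul_div_assoc, mul_div_mul_left _ _ hr]

theorem P_limits_at_top (n : ℕ) :
    Tendsto (P n) atTop (nhds 0) ∧ Tendsto (fun r : ℝ => r * P n r) atTop (nhds 1) := by
  have hmul : Tendsto (fun r : ℝ => r * P n r) atTop (nhds 1) :=
    (tendsto_besselI_succ_div_atTop n).congr' <| by
      filter_upwards [eventually_ne_atTop 0] with r hr using (mul_P n hr).symm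
  refine ⟨?_, hmul⟩
  have hdiv := hmul.mul tendsto_inv_atTop_zero
  rw [mul_zero] at hdiv
  refine hdiv.congr' ?_
  filter_upwards [eventually_ne_atTop 0] with r hr
  field_simp
end

section
/- Fix constants σ̄ > σ̃ > 0 and for each α > 0 let R(α) be the unique positive solution of α·P_0(R)/(α + R·P_0(R)) = σ̃/(2σ̄). Then R(α) is strictly increasing in α, R(α) → 0 as α → 0⁺, and R(α) → R_D as α → ∞, where R_D is the unique positive root of P_0(R_D) = σ̃/(2σ̄). -/
/-!
With `t = (r / 2) ^ 2` one has `P 0 r = h t / (2 g t)`, where `g t = ∑ t ^ k / (k!) ^ 2` and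
`h t = ∑ t ^ k / (k! (k + 1)!)`. The coefficient ratio `1 / (k + 1)` of `h` to `g` decreases, and
symmetrising the double series of `h t g s - h s g t` under `(k, l) ↦ (l, k)` makes every term
nonnegative; so `P 0` is strictly decreasing on `(0, ∞)`.

With `c = σ̃ / (2 σ̄) = P 0 R_D`, the equation for `R α` reads `R α / α = c⁻¹ - (P 0 (R α))⁻¹`.
Monotonicity of `P 0` then forces `R` to increase, gives `R α ≤ α / c` and `R α < R_D`, and the
last bound makes `R α / α → 0`, so `P 0 (R α) → P 0 R_D` and hence `R α → R_D`.
-/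

open Real Filter Set

open Topology

lemma pow_mul_pow_le_pow_mul_pow {s t : ℝ} (hs : 0 ≤ s) (hst : s ≤ t) {l k : ℕ} (hlk : l ≤ k) :
    s ^ k * t ^ l ≤ t ^ k * s ^ l := by
  have ht : 0 ≤ t := hs.trans hst
  obtain ⟨m, rfl⟩ := Nat.exists_eq_add_of_le hlk
  calc s ^ (l + m) * t ^ l = s ^ l * t ^ l * s ^ m := by ring
    _ ≤ s ^ l * t ^ l * t ^ m := by gcongr
    _ = t ^ (l + m) * s ^ l := by ring

section RatioOfPowerSeries

variable {a b : ℕ → ℝ}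

lemma cross_term_nonneg (hab : ∀ ⦃l k⦄, l ≤ k → a l * b k ≤ a k * b l) {s t : ℝ} (hs : 0 ≤ s)
    (hst : s ≤ t) (k l : ℕ) :
    0 ≤ (a k * b l - a l * b k) * (t ^ k * s ^ l - s ^ k * t ^ l) := by
  rcases le_total l k with h | h
  · exact mul_nonneg (sub_nonneg.2 (hab h)) (sub_nonneg.2 (pow_mul_pow_le_pow_mul_pow hs hst h))
  · exact mul_nonneg_of_nonpos_of_nonpos (sub_nonpos.2 (hab h))
      (by linarith [pow_mul_pow_le_pow_mul_pow hs hst h])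

/-- `t ↦ (∑ b k t ^ k) / (∑ a k t ^ k)` is strictly decreasing, stated without division. -/
theorem tsum_mul_tsum_lt_of_ratio_antitone (ha : 0 ≤ a) (hb : 0 ≤ b)
    (hab : ∀ ⦃l k⦄, l ≤ k → a l * b k ≤ a k * b l) (hab₀₁ : a 0 * b 1 < a 1 * b 0)
    {s t : ℝ} (hs : 0 ≤ s) (hst : s < t)
    (hat : Summable fun k ↦ a k * t ^ k) (hbt : Summable fun k ↦ b k * t ^ k) :
    (∑' k, b k * t ^ k) * ∑' k, a k * s ^ k < (∑' k, b k * s ^ k) * ∑' k, a k * t ^ k := by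
  have ht : 0 ≤ t := hs.trans hst.le
  have summable_at_s : ∀ c : ℕ → ℝ, 0 ≤ c → (Summable fun k ↦ c k * t ^ k) →
      Summable fun k ↦ c k * s ^ k := fun c hc h ↦
    h.of_nonneg_of_le (fun k ↦ mul_nonneg (hc k) (pow_nonneg hs k))
      (fun k ↦ mul_le_mul_of_nonneg_left (pow_le_pow_left₀ hs hst.le k) (hc k))
  have has := summable_at_s a ha hat
  have hbs := summable_at_s b hb hbt
  set u : ℕ × ℕ → ℝ := fun p ↦ b p.1 * s ^ p.1 * (a p.2 * t ^ p.2) with hu_def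
  set v : ℕ × ℕ → ℝ := fun p ↦ b p.1 * t ^ p.1 * (a p.2 * s ^ p.2) with hv_def
  have hu : Summable u := hbs.mul_of_nonneg hat (fun k ↦ mul_nonneg (hb k) (pow_nonneg hs k))
    (fun k ↦ mul_nonneg (ha k) (pow_nonneg ht k))
  have hv : Summable v := hbt.mul_of_nonneg has (fun k ↦ mul_nonneg (hb k) (pow_nonneg ht k))
    (fun k ↦ mul_nonneg (ha k) (pow_nonneg hs k))
  have hsu : (∑' k, b k * s ^ k) * ∑' k, a k * t ^ k = ∑' p, u p := hbs.tsum_mul_tsum hat hu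
  have htv : (∑' k, b k * t ^ k) * ∑' k, a k * s ^ k = ∑' p, v p := hbt.tsum_mul_tsum has hv
  clear_value u v
  -- Symmetrising `u - v` under `p ↦ p.swap` gives a summand that is a product of two factors
  -- of the same sign, by the monotonicity of `b / a` and of `t / s`.
  set w : ℕ × ℕ → ℝ := fun p ↦
    (a p.1 * b p.2 - a p.2 * b p.1) * (t ^ p.1 * s ^ p.2 - s ^ p.1 * t ^ p.2)
  have hw : w = fun p ↦ (u p - v p) + (u p.swap - v p.swap) := by
    funext p; simp only [w, hu_def, hv_def, Prod.fst_swap, Prod.snd_swap]; ring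
  have huv : Summable fun p ↦ u p - v p := hu.sub hv
  have hw_pos : 0 < ∑' p, w p :=
    (hw ▸ huv.add huv.prod_symm).tsum_pos (fun p ↦ cross_term_nonneg hab hs hst.le p.1 p.2) (1, 0)
      (mul_pos (by linarith) (by simpa using hst))
  have hw_sum : ∑' p, w p = 2 * (∑' p, u p - ∑' p, v p) := by
    have hswap : ∑' p : ℕ × ℕ, (u p.swap - v p.swap) = ∑' p, (u p - v p) :=
      (Equiv.prodComm ℕ ℕ).tsum_eq fun p ↦ u p - v p
    rw [hw, huv.tsum_add huv.prod_symm, hswap, hu.tsum_sub hv]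
    ring
  rw [hsu, htv]
  linarith

end RatioOfPowerSeries

section BesselSeries

open Nat

noncomputable def invFactorialSq (k : ℕ) : ℝ := ((k ! : ℝ) ^ 2)⁻¹

lemma invFactorialSq_nonneg : 0 ≤ invFactorialSq := fun k ↦ by
  unfold invFactorialSq; positivity

lemma invFactorialSq_div_succ_nonneg : 0 ≤ fun k ↦ invFactorialSq k / (k + 1) := fun k ↦
  div_nonneg (invFactorialSq_nonneg k) k.cast_add_one_pos.le

lemma summable_invFactorialSq_mul_pow {t : ℝ} (ht : 0 ≤ t) :
    Summable fun k ↦ invFactorialSq k * t ^ k := by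
  refine (Real.summable_pow_div_factorial t).of_nonneg_of_le
    (fun k ↦ mul_nonneg (invFactorialSq_nonneg k) (pow_nonneg ht k)) fun k ↦ ?_
  have hk : (1 : ℝ) ≤ k ! := by exact_mod_cast k.factorial_pos
  rw [div_eq_inv_mul, invFactorialSq, sq]
  gcongr
  exact le_mul_of_one_le_left (by positivity) hk

lemma summable_invFactorialSq_div_succ_mul_pow {t : ℝ} (ht : 0 ≤ t) :
    Summable fun k ↦ invFactorialSq k / (k + 1) * t ^ k :=
  (summable_invFactorialSq_mul_pow ht).of_nonneg_of_le
    (fun k ↦ mul_nonneg (invFactorialSq_div_succ_nonneg k) (pow_nonneg ht k))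
    fun k ↦ by
      have := invFactorialSq_nonneg k
      gcongr
      exact div_le_self this (by linarith [k.cast_nonneg (α := ℝ)])

lemma besselI_zero_eq (r : ℝ) :
    besselI 0 r = ∑' k, invFactorialSq k * ((r / 2) ^ 2) ^ k := by
  refine tsum_congr fun k ↦ ?_
  rw [show ((0 : ℕ) : ℝ) + k + 1 = k + 1 by push_cast; ring, Real.Gamma_nat_eq_factorial,
    invFactorialSq, ← pow_mul, zero_add, sq, mul_inv, one_div]
  ring

lemma besselI_one_eq (r : ℝ) :
    besselI 1 r = r / 2 * ∑' k, invFactorialSq k / (k + 1) * ((r / 2) ^ 2) ^ k := by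
  rw [← tsum_mul_left]
  refine tsum_congr fun k ↦ ?_
  rw [show ((1 : ℕ) : ℝ) + k + 1 = (k + 1 : ℕ) + 1 by push_cast; ring,
    Real.Gamma_nat_eq_factorial, Nat.factorial_succ, invFactorialSq, ← pow_mul]
  have := k.factorial_pos
  push_cast
  field_simp
  ring

lemma invFactorialSq_div_succ_ratio_antitone ⦃l k : ℕ⦄ (hlk : l ≤ k) :
    invFactorialSq l * (invFactorialSq k / (k + 1)) ≤
      invFactorialSq k * (invFactorialSq l / (l + 1)) := by
  rw [mul_div_assoc', mul_div_assoc', mul_comm (invFactorialSq l)]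
  exact div_le_div_of_nonneg_left (mul_nonneg (invFactorialSq_nonneg k) (invFactorialSq_nonneg l))
    l.cast_add_one_pos (by gcongr)

lemma tsum_invFactorialSq_mul_pow_pos {t : ℝ} (ht : 0 ≤ t) :
    0 < ∑' k, invFactorialSq k * t ^ k :=
  (summable_invFactorialSq_mul_pow ht).tsum_pos
    (fun k ↦ mul_nonneg (invFactorialSq_nonneg k) (pow_nonneg ht k)) 0 (by simp [invFactorialSq])

lemma tsum_invFactorialSq_div_succ_mul_pow_pos {t : ℝ} (ht : 0 ≤ t) :
    0 < ∑' k, invFactorialSq k / (k + 1) * t ^ k :=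
  (summable_invFactorialSq_div_succ_mul_pow ht).tsum_pos
    (fun k ↦ mul_nonneg (invFactorialSq_div_succ_nonneg k) (pow_nonneg ht k)) 0
    (by simp [invFactorialSq])

end BesselSeries

lemma P_zero_eq {r : ℝ} (hr : r ≠ 0) :
    P 0 r = (∑' k, invFactorialSq k / (k + 1) * ((r / 2) ^ 2) ^ k) /
      (2 * ∑' k, invFactorialSq k * ((r / 2) ^ 2) ^ k) := by
  rw [P, zero_add, besselI_one_eq, besselI_zero_eq, mul_div_mul_comm, div_div_cancel_left' hr]
  ring

lemma P_zero_pos {r : ℝ} (hr : r ≠ 0) : 0 < P 0 r := by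
  rw [P_zero_eq hr]
  have := tsum_invFactorialSq_mul_pow_pos (sq_nonneg (r / 2))
  have := tsum_invFactorialSq_div_succ_mul_pow_pos (sq_nonneg (r / 2))
  positivity

theorem P_zero_strictAntiOn : StrictAntiOn (P 0) (Ioi 0) := by
  intro r₁ (hr₁ : 0 < r₁) r₂ (hr₂ : 0 < r₂) hr
  have ht₁ : 0 ≤ (r₁ / 2) ^ 2 := sq_nonneg _
  have ht₂ : 0 ≤ (r₂ / 2) ^ 2 := sq_nonneg _
  have key := tsum_mul_tsum_lt_of_ratio_antitone invFactorialSq_nonneg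
    invFactorialSq_div_succ_nonneg invFactorialSq_div_succ_ratio_antitone
    (by norm_num [invFactorialSq]) ht₁ (by gcongr) (summable_invFactorialSq_mul_pow ht₂)
    (summable_invFactorialSq_div_succ_mul_pow ht₂)
  rw [P_zero_eq hr₁.ne', P_zero_eq hr₂.ne', div_lt_div_iff₀
    (mul_pos two_pos (tsum_invFactorialSq_mul_pow_pos ht₂))
    (mul_pos two_pos (tsum_invFactorialSq_mul_pow_pos ht₁))]
  linarith

theorem StrictAntiOn.tendsto_of_tendsto_comp {ι α β : Type*} [LinearOrder α] [TopologicalSpace α]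
    [OrderTopology α] [DenselyOrdered α] [LinearOrder β] [TopologicalSpace β] [OrderTopology β]
    {f : α → β} {m x₀ : α} (hf : StrictAntiOn f (Ioi m)) (hx₀ : m < x₀) {l : Filter ι}
    {u : ι → α} (hu : ∀ᶠ i in l, m < u i) (hfu : Tendsto (f ∘ u) l (𝓝 (f x₀))) :
    Tendsto u l (𝓝 x₀) := by
  refine tendsto_order.2 ⟨fun a ha ↦ ?_, fun b hb ↦ ?_⟩
  · obtain ⟨a', ha', ha'x₀⟩ := exists_between (max_lt ha hx₀)
    have hma' : m < a' := (le_max_right a m).trans_lt ha'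
    filter_upwards [hu, (tendsto_order.1 hfu).2 _ (hf hma' hx₀ ha'x₀)] with i hmi hfi
    exact (le_max_left a m).trans_lt (ha'.trans ((hf.lt_iff_gt hmi hma').1 hfi))
  · have hmb : m < b := hx₀.trans hb
    filter_upwards [hu, (tendsto_order.1 hfu).1 _ (hf hx₀ hmb hb)] with i hmi hfi
    exact (hf.lt_iff_gt hmb hmi).1 hfi

lemma div_eq_inv_sub_inv_of_mul_div_add_mul_eq {α r p c : ℝ} (hα : 0 < α) (hr : 0 < r)
    (hp : 0 < p) (hc : c ≠ 0) (h : α * p / (α + r * p) = c) : r / α = c⁻¹ - p⁻¹ := by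
  rw [div_eq_iff (by positivity)] at h
  field_simp
  linear_combination -h

section RatioEquation

variable {f R : ℝ → ℝ} {c : ℝ}

theorem strictMonoOn_of_div_eq_inv_sub_inv (hf : AntitoneOn f (Ioi 0))
    (hf_pos : ∀ r, 0 < r → 0 < f r)
    (hR : ∀ α, 0 < α → 0 < R α ∧ R α / α = c⁻¹ - (f (R α))⁻¹) :
    StrictMonoOn R (Ioi 0) := by
  intro α (hα : 0 < α) β (hβ : 0 < β) hαβ
  by_contra! hRβα
  obtain ⟨hRα, hα_eq⟩ := hR α hα
  obtain ⟨hRβ, hβ_eq⟩ := hR β hβ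
  have hinv : (f (R β))⁻¹ ≤ (f (R α))⁻¹ := inv_anti₀ (hf_pos _ hRα) (hf hRβ hRα hRβα)
  have : R β / β < R α / α := calc
    R β / β ≤ R α / β := div_le_div_of_nonneg_right hRβα hβ.le
    _ < R α / α := div_lt_div_of_pos_left hRα hα hαβ
  rw [hα_eq, hβ_eq] at this
  linarith

theorem tendsto_nhdsGT_zero_of_div_eq_inv_sub_inv (hf_pos : ∀ r, 0 < r → 0 < f r)
    (hR : ∀ α, 0 < α → 0 < R α ∧ R α / α = c⁻¹ - (f (R α))⁻¹) :
    Tendsto R (𝓝[>] 0) (𝓝 0) := by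
  have hbound : ∀ α, 0 < α → R α ≤ c⁻¹ * α := fun α hα ↦ by
    obtain ⟨hRα, hα_eq⟩ := hR α hα
    have : R α / α ≤ c⁻¹ := by rw [hα_eq]; linarith [inv_pos.2 (hf_pos _ hRα)]
    rwa [div_le_iff₀ hα] at this
  have hlin : Tendsto (fun α ↦ c⁻¹ * α) (𝓝[>] 0) (𝓝 0) := by
    simpa using ((tendsto_id (x := 𝓝 (0 : ℝ))).const_mul c⁻¹).mono_left nhdsWithin_le_nhds
  refine tendsto_of_tendsto_of_tendsto_of_le_of_le' tendsto_const_nhds hlin ?_ ?_ <;>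
    filter_upwards [self_mem_nhdsWithin] with α (hα : 0 < α)
  exacts [(hR α hα).1.le, hbound α hα]

theorem tendsto_atTop_of_div_eq_inv_sub_inv (hf : StrictAntiOn f (Ioi 0))
    (hf_pos : ∀ r, 0 < r → 0 < f r)
    (hR : ∀ α, 0 < α → 0 < R α ∧ R α / α = c⁻¹ - (f (R α))⁻¹)
    {RD : ℝ} (hRD : 0 < RD) (hc : f RD = c) :
    Tendsto R atTop (𝓝 RD) := by
  have hc₀ : 0 < c := hc ▸ hf_pos RD hRD
  have hR_lt : ∀ α, 0 < α → R α < RD := fun α hα ↦ by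
    obtain ⟨hRα, hα_eq⟩ := hR α hα
    have : c < f (R α) := by
      rw [← inv_lt_inv₀ (hf_pos _ hRα) hc₀]
      linarith [div_pos hRα hα]
    by_contra! h
    exact (hc ▸ hf.antitoneOn hRD hRα h).not_gt this
  have hratio : Tendsto (fun α ↦ R α / α) atTop (𝓝 0) := by
    refine tendsto_of_tendsto_of_tendsto_of_le_of_le' tendsto_const_nhds
      (tendsto_const_nhds (x := RD).div_atTop tendsto_id) ?_ ?_ <;>
      filter_upwards [eventually_gt_atTop 0] with α hα
    exacts [(div_pos (hR α hα).1 hα).le, div_le_div_of_nonneg_right (hR_lt α hα).le hα.le]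
  have hinv : Tendsto (fun α ↦ (f (R α))⁻¹) atTop (𝓝 c⁻¹) := by
    have := (tendsto_const_nhds (x := c⁻¹)).sub hratio
    rw [sub_zero] at this
    refine this.congr' ?_
    filter_upwards [eventually_gt_atTop 0] with α hα
    rw [(hR α hα).2, sub_sub_cancel]
  have hfR : Tendsto (f ∘ R) atTop (𝓝 (f RD)) := by
    simpa [hc, Function.comp_def] using hinv.inv₀ (inv_ne_zero hc₀.ne')
  exact hf.tendsto_of_tendsto_comp hRD
    ((eventually_gt_atTop 0).mono fun α hα ↦ (hR α hα).1) hfR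

end RatioEquation

theorem R_monotone_and_limits_general (σbar σtil : ℝ)
    (R : ℝ → ℝ) (hR : ∀ α : ℝ, 0 < α → 0 < R α ∧
      α * P 0 (R α) / (α + R α * P 0 (R α)) = σtil / (2 * σbar))
    (RD : ℝ) (hRD : 0 < RD) (hRDeq : P 0 RD = σtil / (2 * σbar)) :
    StrictMonoOn R (Set.Ioi 0) ∧
    Tendsto R (nhdsWithin 0 (Set.Ioi 0)) (nhds 0) ∧
    Tendsto R atTop (nhds RD) := by
  have hP_pos : ∀ r, 0 < r → 0 < P 0 r := fun r hr ↦ P_zero_pos hr.ne'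
  have hc : σtil / (2 * σbar) ≠ 0 := hRDeq ▸ (hP_pos RD hRD).ne'
  have hR' : ∀ α, 0 < α → 0 < R α ∧ R α / α = (σtil / (2 * σbar))⁻¹ - (P 0 (R α))⁻¹ :=
    fun α hα ↦ ⟨(hR α hα).1, div_eq_inv_sub_inv_of_mul_div_add_mul_eq hα (hR α hα).1
      (hP_pos _ (hR α hα).1) hc (hR α hα).2⟩
  exact ⟨strictMonoOn_of_div_eq_inv_sub_inv P_zero_strictAntiOn.antitoneOn hP_pos hR',
    tendsto_nhdsGT_zero_of_div_eq_inv_sub_inv hP_pos hR',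
    tendsto_atTop_of_div_eq_inv_sub_inv P_zero_strictAntiOn hP_pos hR' hRD hRDeq⟩

theorem R_monotone_and_limits (σbar σtil : ℝ) (hσ : σtil < σbar) (hσt : 0 < σtil)
    (R : ℝ → ℝ) (hR : ∀ α : ℝ, 0 < α → 0 < R α ∧
      α * P 0 (R α) / (α + R α * P 0 (R α)) = σtil / (2 * σbar))
    (RD : ℝ) (hRD : 0 < RD) (hRDeq : P 0 RD = σtil / (2 * σbar)) :
    StrictMonoOn R (Set.Ioi 0) ∧
    Tendsto R (nhdsWithin 0 (Set.Ioi 0)) (nhds 0) ∧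
    Tendsto R atTop (nhds RD) :=
  R_monotone_and_limits_general σbar σtil R hR RD hRD hRDeq
end
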